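/- arXiv:0912.3126 — 3 statements merged into one kernel-verified Lean document; each statement's English description precedes it below -/
import Mathlib

section
/- Let h > 0 and let l₁ ≥ l₂ ≥ l₃ be real numbers with l₁ + l₂ + l₃ = t ≥ 0 and l₃ ≤ −h·t, and assume l₃ < 0. Then if t > 0 one has h/(2h + 1) ≤ −l₁/l₃ ≤ (2h + 1)/h, and if t = 0 one has 1/2 ≤ −l₁/l₃ ≤ 2. -/
/-!
Put `s = -l₃ > 0`. Since `l₁ ≥ l₂`, `2 l₁ ≥ l₁ + l₂ = t + s ≥ s`, so `-l₁/l₃ ≥ 1/2`, which already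
beats `h/(2h+1)`. Since `l₂ ≥ l₃`, `l₁ ≤ t + 2 s`, so `-l₁/l₃ ≤ 2 + t/s`, and `l₃ ≤ -h t` gives
`t/s ≤ 1/h`.
-/

section OrderedField

variable {K : Type*} [Field K] [LinearOrder K] [IsStrictOrderedRing K] {t l₁ l₂ l₃ : K}

theorem half_le_neg_div_of_add_add_eq (h12 : l₂ ≤ l₁) (hsum : l₁ + l₂ + l₃ = t) (ht : 0 ≤ t)
    (hl₃ : l₃ < 0) : 1 / 2 ≤ -l₁ / l₃ := by
  rw [neg_div, ← div_neg, div_le_div_iff₀ two_pos (neg_pos.mpr hl₃)]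
  linarith

theorem neg_div_le_two_add_div_neg_of_add_add_eq (h23 : l₃ ≤ l₂) (hsum : l₁ + l₂ + l₃ = t)
    (hl₃ : l₃ < 0) : -l₁ / l₃ ≤ 2 + t / -l₃ := by
  have hs : 0 < -l₃ := neg_pos.mpr hl₃
  calc -l₁ / l₃ = l₁ / -l₃ := by rw [neg_div, div_neg]
    _ ≤ (2 * -l₃ + t) / -l₃ := by gcongr; linarith
    _ = 2 + t / -l₃ := by rw [add_div, mul_div_cancel_right₀ _ hs.ne']

end OrderedField

/-- The **Claim** in the proof of Lemma 4.1: if `l₁ ≥ l₂ ≥ l₃`, `l₁ + l₂ + l₃ = t ≥ 0`,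
`l₃ ≤ −h·t` with `h > 0`, and `l₃ < 0`, then `−l₁/l₃ ∈ [h/(2h+1), (2h+1)/h]` when `t > 0`
and `−l₁/l₃ ∈ [1/2, 2]` when `t = 0`. -/
theorem claim_lemma_4_1 (h t l₁ l₂ l₃ : ℝ) (hh : 0 < h)
    (h12 : l₂ ≤ l₁) (h23 : l₃ ≤ l₂) (hsum : l₁ + l₂ + l₃ = t) (ht : 0 ≤ t)
    (hl₃t : l₃ ≤ -h * t) (hl₃ : l₃ < 0) :
    (0 < t → h / (2 * h + 1) ≤ -l₁ / l₃ ∧ -l₁ / l₃ ≤ (2 * h + 1) / h) ∧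
    (t = 0 → 1 / 2 ≤ -l₁ / l₃ ∧ -l₁ / l₃ ≤ 2) := by
  have lower := half_le_neg_div_of_add_add_eq h12 hsum ht hl₃
  have upper := neg_div_le_two_add_div_neg_of_add_add_eq h23 hsum hl₃
  refine ⟨fun _ ↦ ⟨?_, ?_⟩, fun ht0 ↦ ⟨lower, by simpa [ht0] using upper⟩⟩
  · calc h / (2 * h + 1) ≤ 1 / 2 := by rw [div_le_div_iff₀ (by positivity) two_pos]; linarith
      _ ≤ -l₁ / l₃ := lower
  · have hratio : t / -l₃ ≤ 1 / h := by
      rw [div_le_div_iff₀ (neg_pos.mpr hl₃) hh]; linarith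
    calc -l₁ / l₃ ≤ 2 + 1 / h := upper.trans (by gcongr)
      _ = (2 * h + 1) / h := by field_simp
end

section
/- Let n ≥ 2 and let F₁, F₂ be symmetric n×n real matrices such that for every (α, β) ∈ ℝ²∖{(0,0)} the matrix αF₁ + βF₂ is strictly hyperbolic, i.e. has at least one strictly positive and at least one strictly negative eigenvalue. Then there exists a positive definite symmetric n×n matrix Q such that Tr(F₁·Q) = 0 and Tr(F₂·Q) = 0. -/
/-!
The set `S = {(Tr(F₁Q), Tr(F₂Q)) : Q ≻ 0}` is convex. If `0 ∉ S`, a supporting line through `0`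
gives `(α, β) ≠ 0` with `Tr((αF₁ + βF₂)Q) ≤ 0` for every `Q ≻ 0`. Letting `Q = vvᵀ + εI` with
`ε → 0` shows that `αF₁ + βF₂` is negative semidefinite, contradicting the positive eigenvalue
given by strict hyperbolicity.
-/

open Matrix

open Polynomial in
/-- The cubic form `P(X,Y,Z) = Re((oX·oY)·oZ)` on `ℝ⁸ × ℝ⁸ × ℝ⁸`. -/
noncomputable def P3 (X Y Z : EuclideanSpace ℝ (Fin 8)) : ℝ :=
  X 0 * (Y 0 * Z 0 - Y 1 * Z 1 - Y 2 * Z 2 - Y 3 * Z 3 - Y 4 * Z 4 - Y 5 * Z 5 - Y 6 * Z 6 - Y 7 * Z 7) +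
  X 1 * (-(Y 0 * Z 1) - Y 1 * Z 0 - Y 2 * Z 4 - Y 3 * Z 7 + Y 4 * Z 2 - Y 5 * Z 6 + Y 6 * Z 5 + Y 7 * Z 3) +
  X 2 * (-(Y 0 * Z 2) + Y 1 * Z 4 - Y 2 * Z 0 - Y 3 * Z 5 - Y 4 * Z 1 + Y 5 * Z 3 - Y 6 * Z 7 + Y 7 * Z 6) +
  X 3 * (-(Y 0 * Z 3) + Y 1 * Z 7 + Y 2 * Z 5 - Y 3 * Z 0 - Y 4 * Z 6 - Y 5 * Z 2 + Y 6 * Z 4 - Y 7 * Z 1) +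
  X 4 * (-(Y 0 * Z 4) - Y 1 * Z 2 + Y 2 * Z 1 + Y 3 * Z 6 - Y 4 * Z 0 - Y 5 * Z 7 - Y 6 * Z 3 + Y 7 * Z 5) +
  X 5 * (-(Y 0 * Z 5) + Y 1 * Z 6 - Y 2 * Z 3 + Y 3 * Z 2 + Y 4 * Z 7 - Y 5 * Z 0 - Y 6 * Z 1 - Y 7 * Z 4) +
  X 6 * (-(Y 0 * Z 6) - Y 1 * Z 5 + Y 2 * Z 7 - Y 3 * Z 4 + Y 4 * Z 3 + Y 5 * Z 1 - Y 6 * Z 0 - Y 7 * Z 2) +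
  X 7 * (-(Y 0 * Z 7) - Y 1 * Z 3 - Y 2 * Z 6 + Y 3 * Z 1 - Y 4 * Z 5 + Y 5 * Z 4 + Y 6 * Z 2 - Y 7 * Z 0)

/-- The `X`-part of a vector in `ℝ²⁴ = ℝ⁸ × ℝ⁸ × ℝ⁸`. -/
noncomputable def Xpart (v : EuclideanSpace ℝ (Fin 24)) : EuclideanSpace ℝ (Fin 8) :=
  WithLp.toLp 2 fun i : Fin 8 => v ⟨i.1, by omega⟩

/-- The `Y`-part of a vector in `ℝ²⁴ = ℝ⁸ × ℝ⁸ × ℝ⁸`. -/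
noncomputable def Ypart (v : EuclideanSpace ℝ (Fin 24)) : EuclideanSpace ℝ (Fin 8) :=
  WithLp.toLp 2 fun i : Fin 8 => v ⟨i.1 + 8, by omega⟩

/-- The `Z`-part of a vector in `ℝ²⁴ = ℝ⁸ × ℝ⁸ × ℝ⁸`. -/
noncomputable def Zpart (v : EuclideanSpace ℝ (Fin 24)) : EuclideanSpace ℝ (Fin 8) :=
  WithLp.toLp 2 fun i : Fin 8 => v ⟨i.1 + 16, by omega⟩

/-- The octonionic triality cubic form on `ℝ²⁴`. -/
noncomputable def P24 (v : EuclideanSpace ℝ (Fin 24)) : ℝ :=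
  P3 (Xpart v) (Ypart v) (Zpart v)

/-- `m(a) = |x|·|y|·|z|` for `a = (x,y,z) ∈ ℝ²⁴`. -/
noncomputable def mval (v : EuclideanSpace ℝ (Fin 24)) : ℝ :=
  ‖Xpart v‖ * ‖Ypart v‖ * ‖Zpart v‖

/-- The Hessian matrix of `f : ℝⁿ → ℝ` at `x`. -/
noncomputable def hessianMatrix {n : ℕ} (f : EuclideanSpace ℝ (Fin n) → ℝ)
    (x : EuclideanSpace ℝ (Fin n)) : Matrix (Fin n) (Fin n) ℝ :=
  Matrix.of fun i j =>
    iteratedFDeriv ℝ 2 f x ![EuclideanSpace.single i 1, EuclideanSpace.single j 1]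

/-- `lam` lists the eigenvalues of `A` in decreasing order with multiplicity. -/
def IsEigDecreasing {n : ℕ} (A : Matrix (Fin n) (Fin n) ℝ) (lam : Fin n → ℝ) : Prop :=
  Antitone lam ∧ A.charpoly = ∏ i, (Polynomial.X - Polynomial.C (lam i))

/-- The operator norm of a matrix, acting on Euclidean space. -/
noncomputable def opNorm {n : ℕ} (A : Matrix (Fin n) (Fin n) ℝ) : ℝ :=
  ‖Matrix.toEuclideanCLM (𝕜 := ℝ) A‖

/-- `F` is uniformly elliptic with constant `C`. -/
def UniformlyElliptic {n : ℕ} (C : ℝ) (F : Matrix (Fin n) (Fin n) ℝ → ℝ) : Prop :=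
  ∀ M N : Matrix (Fin n) (Fin n) ℝ, M.IsSymm → N.PosSemidef →
    C⁻¹ * opNorm N ≤ F (M + N) - F M ∧ F (M + N) - F M ≤ C * opNorm N

/-- `u` is a viscosity solution of `G(D²u) = 0` in `Ω`. -/
def IsViscositySolution {n : ℕ} (Ω : Set (EuclideanSpace ℝ (Fin n)))
    (G : Matrix (Fin n) (Fin n) ℝ → ℝ) (u : EuclideanSpace ℝ (Fin n) → ℝ) : Prop :=
  ∀ x₀ ∈ Ω, ∀ φ : EuclideanSpace ℝ (Fin n) → ℝ, ContDiff ℝ 2 φ →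
    (IsLocalMax (fun x => u x - φ x) x₀ → 0 ≤ G (hessianMatrix φ x₀)) ∧
    (IsLocalMin (fun x => u x - φ x) x₀ → G (hessianMatrix φ x₀) ≤ 0)

open Filter Topology Polynomial

theorem Convex.exists_forall_le_of_notMem_interior {E : Type*} [NormedAddCommGroup E]
    [NormedSpace ℝ E] [FiniteDimensional ℝ E] {C : Set E} {x : E} (hC : Convex ℝ C)
    (hne : C.Nonempty) (hx : x ∉ interior C) :
    ∃ f : StrongDual ℝ E, f ≠ 0 ∧ ∀ a ∈ C, f a ≤ f x := by
  rcases (interior C).eq_empty_or_nonempty with hint | hint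
  · obtain ⟨c, hc⟩ := hne
    have hdir : (affineSpan ℝ C).direction < ⊤ := by
      rw [lt_top_iff_ne_top, Ne, AffineSubspace.direction_eq_top_iff_of_nonempty
        ⟨c, subset_affineSpan ℝ C hc⟩, ← hC.interior_nonempty_iff_affineSpan_eq_top, hint]
      exact Set.not_nonempty_empty
    obtain ⟨g, hg, hmap⟩ := Submodule.exists_dual_map_eq_bot_of_lt_top hdir inferInstance
    -- `g` is constant on `C`, so `g` or `-g` is maximised at `x`.
    have hconst : ∀ a ∈ C, g a = g c := fun a ha => by
      have hmem : a -ᵥ c ∈ (affineSpan ℝ C).direction := AffineSubspace.vsub_mem_direction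
        (subset_affineSpan ℝ C ha) (subset_affineSpan ℝ C hc)
      have := Submodule.mem_map_of_mem (f := g) hmem
      rwa [hmap, Submodule.mem_bot, vsub_eq_sub, map_sub, sub_eq_zero] at this
    rcases le_total (g c) (g x) with hle | hle
    · refine ⟨LinearMap.toContinuousLinearMap g, by simpa using hg, fun a ha => ?_⟩
      simpa [hconst a ha] using hle
    · refine ⟨-LinearMap.toContinuousLinearMap g, by simpa using hg, fun a ha => ?_⟩
      simpa [hconst a ha] using hle
  · exact geometric_hahn_banach_of_nonempty_interior_point hC hx hint

namespace Matrix

theorem convex_setOf_posDef {n : Type*} [Fintype n] :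
    Convex ℝ {Q : Matrix n n ℝ | Q.PosDef} :=
  convex_iff_forall_pos.mpr fun _ hP _ hQ _ _ ha hb _ => (hP.smul ha).add (hQ.smul hb)

theorem trace_mul_vecMulVec_self {n R : Type*} [Fintype n] [CommRing R] (G : Matrix n n R)
    (v : n → R) : (G * vecMulVec v v).trace = v ⬝ᵥ G *ᵥ v := by
  rw [trace_mul_comm, vecMulVec_mul, trace_vecMulVec, dotProduct_mulVec, dotProduct_comm]

theorem dotProduct_mulVec_nonpos_of_forall_posDef {n : Type*} [Fintype n] [DecidableEq n]
    {G : Matrix n n ℝ} (hG : ∀ Q : Matrix n n ℝ, Q.PosDef → (G * Q).trace ≤ 0) (v : n → ℝ) :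
    v ⬝ᵥ G *ᵥ v ≤ 0 := by
  have hε : ∀ ε > 0, v ⬝ᵥ G *ᵥ v + ε * G.trace ≤ 0 := fun ε hε => by
    have hQ : (vecMulVec v v + ε • 1 : Matrix n n ℝ).PosDef :=
      PosDef.posSemidef_add (posSemidef_vecMulVec_self_star v) (PosDef.one.smul hε)
    simpa [mul_add, trace_mul_vecMulVec_self] using hG _ hQ
  have hlim : Tendsto (fun ε : ℝ => v ⬝ᵥ G *ᵥ v + ε * G.trace) (𝓝[>] 0) (𝓝 (v ⬝ᵥ G *ᵥ v)) :=
    tendsto_nhdsWithin_of_tendsto_nhds <| Continuous.tendsto' (by fun_prop) 0 _ (by simp)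
  exact le_of_tendsto hlim (eventually_nhdsWithin_of_forall hε)

theorem exists_posDef_forall_trace_mul_eq_zero {ι n : Type*} [Fintype ι] [Fintype n]
    [DecidableEq n] (F : ι → Matrix n n ℝ)
    (hF : ∀ c : ι → ℝ, c ≠ 0 → ∃ v, 0 < v ⬝ᵥ (∑ i, c i • F i) *ᵥ v) :
    ∃ Q : Matrix n n ℝ, Q.PosDef ∧ ∀ i, (F i * Q).trace = 0 := by
  classical
  let L : Matrix n n ℝ →ₗ[ℝ] ι → ℝ :=
    LinearMap.pi fun i => (traceLinearMap n ℝ ℝ).comp (LinearMap.mulLeft ℝ (F i))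
  by_contra hQ
  have h0 : (0 : ι → ℝ) ∉ interior (L '' {Q | Q.PosDef}) := fun h => by
    obtain ⟨Q, hQpos, hLQ⟩ := interior_subset h
    exact hQ ⟨Q, hQpos, fun i => congrFun hLQ i⟩
  obtain ⟨f, hf, hle⟩ := (convex_setOf_posDef.linear_image L).exists_forall_le_of_notMem_interior
    ⟨L 1, 1, PosDef.one, rfl⟩ h0
  set c : ι → ℝ := fun i => f fun j => if i = j then 1 else 0
  have hfL : ∀ Q, f (L Q) = ((∑ i, c i • F i) * Q).trace := fun Q => by
    rw [← f.coe_coe, LinearMap.pi_apply_eq_sum_univ, Finset.sum_mul, trace_sum]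
    refine Finset.sum_congr rfl fun i _ => ?_
    simp [L, c, mul_comm]
  have hc : c ≠ 0 := fun hc => hf <| ContinuousLinearMap.ext fun x => by
    rw [← f.coe_coe, LinearMap.pi_apply_eq_sum_univ]
    exact Finset.sum_eq_zero fun i _ => by simpa using Or.inr (congrFun hc i)
  obtain ⟨v, hv⟩ := hF c hc
  refine hv.not_ge (dotProduct_mulVec_nonpos_of_forall_posDef (fun Q hQpos => ?_) v)
  simpa [hfL] using hle _ ⟨Q, hQpos, rfl⟩

theorem exists_dotProduct_mulVec_pos_of_hasEigenvalue {n : Type*} [Fintype n] [DecidableEq n]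
    {A : Matrix n n ℝ} {μ : ℝ} (h : Module.End.HasEigenvalue (toLin' A) μ) (hμ : 0 < μ) :
    ∃ v, 0 < v ⬝ᵥ A *ᵥ v := by
  obtain ⟨v, hv⟩ := h.exists_hasEigenvector
  refine ⟨v, ?_⟩
  rw [← toLin'_apply, hv.apply_eq_smul, dotProduct_smul, smul_eq_mul]
  exact mul_pos hμ (by simpa using dotProduct_star_self_pos_iff.mpr hv.2)

theorem IsHermitian.exists_isEigDecreasing {n : ℕ} {A : Matrix (Fin n) (Fin n) ℝ}
    (hA : A.IsHermitian) : ∃ lam, IsEigDecreasing A lam := by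
  refine ⟨hA.eigenvalues₀ ∘ finCongr (Fintype.card_fin n).symm,
    hA.eigenvalues₀_antitone.comp_monotone fun _ _ h => h, ?_⟩
  rw [hA.charpoly_eq]
  exact (Equiv.prod_comp _ (fun j => X - C (hA.eigenvalues₀ j))).trans (Equiv.prod_comp _ _).symm

end Matrix

theorem IsEigDecreasing.hasEigenvalue {n : ℕ} {A : Matrix (Fin n) (Fin n) ℝ} {lam : Fin n → ℝ}
    (h : IsEigDecreasing A lam) (i : Fin n) : Module.End.HasEigenvalue (toLin' A) (lam i) := by
  rw [Module.End.hasEigenvalue_iff_isRoot_charpoly, charpoly_toLin', h.2, IsRoot, eval_prod]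
  exact Finset.prod_eq_zero (Finset.mem_univ i) (by simp)

/-- **Lemma 5.2**: if every nontrivial linear combination `αF₁ + βF₂` of the symmetric
matrices `F₁`, `F₂` is strictly hyperbolic (has a positive and a negative eigenvalue),
then some positive definite symmetric matrix `Q` satisfies `Tr(F₁Q) = Tr(F₂Q) = 0`. -/
theorem lemma_5_2 {n : ℕ} (hn : 2 ≤ n) (F₁ F₂ : Matrix (Fin n) (Fin n) ℝ)
    (hF₁ : F₁.IsSymm) (hF₂ : F₂.IsSymm)
    (hhyp : ∀ α β : ℝ, (α, β) ≠ (0, 0) →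
      ∀ lam : Fin n → ℝ, IsEigDecreasing (α • F₁ + β • F₂) lam →
        0 < lam ⟨0, by omega⟩ ∧ lam ⟨n - 1, by omega⟩ < 0) :
    ∃ Q : Matrix (Fin n) (Fin n) ℝ, Q.PosDef ∧ (F₁ * Q).trace = 0 ∧ (F₂ * Q).trace = 0 := by
  have hpos : ∀ c : Fin 2 → ℝ, c ≠ 0 → ∃ v, 0 < v ⬝ᵥ (∑ i, c i • ![F₁, F₂] i) *ᵥ v := by
    intro c hc
    have hc' : (c 0, c 1) ≠ (0, 0) := fun h => hc <| by
      ext i; fin_cases i <;> simp_all [Prod.ext_iff]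
    have hG : (c 0 • F₁ + c 1 • F₂).IsHermitian :=
      isHermitian_iff_isSymm.mpr ((hF₁.smul _).add (hF₂.smul _))
    obtain ⟨lam, hlam⟩ := hG.exists_isEigDecreasing
    simpa [Fin.sum_univ_two] using exists_dotProduct_mulVec_pos_of_hasEigenvalue
      (hlam.hasEigenvalue _) (hhyp _ _ hc' lam hlam).1
  obtain ⟨Q, hQ, htr⟩ := exists_posDef_forall_trace_mul_eq_zero ![F₁, F₂] hpos
  exact ⟨Q, hQ, htr 0, htr 1⟩
end

section
/- For s = (s₀,s₁,s₂,s₃) ∈ ℝ⁴ define the 4×4 matrices M_s with rows (s₀,−s₁,−s₂,−s₃), (−s₁,−s₀,−s₃,s₂), (−s₂,s₃,−s₀,−s₁), (−s₃,−s₂,s₁,−s₀) and L_s with rows (−s₀,−s₁,s₂,−s₃), (s₁,−s₀,−s₃,−s₂), (−s₂,s₃,−s₀,−s₁), (s₃,s₂,s₁,−s₀). For r, s, t ∈ ℝ⁴ let p := P(X,Y,Z) where X = (r₀,r₁,r₂,0,r₃,0,0,0), Y = (s₀,s₁,s₂,0,s₃,0,0,0), Z = (t₀,t₁,t₂,0,t₃,0,0,0),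 and let m := |r|²·|s|²·|t|². Then det(T·I₄ − M_r·M_s·M_t) = (T² − m)(T² + 2pT + m) and det(T·I₄ − L_r·L_s·L_t) = (T² + 2pT + m)². -/
open Matrix

/-- The matrix `M_s`, `s ∈ ℝ⁴`. -/
noncomputable def Mmat (s : EuclideanSpace ℝ (Fin 4)) : Matrix (Fin 4) (Fin 4) ℝ :=
  !![s 0, -s 1, -s 2, -s 3;
     -s 1, -s 0, -s 3, s 2;
     -s 2, s 3, -s 0, -s 1;
     -s 3, -s 2, s 1, -s 0]

/-- The matrix `L_s`, `s ∈ ℝ⁴`. -/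
noncomputable def Lmat (s : EuclideanSpace ℝ (Fin 4)) : Matrix (Fin 4) (Fin 4) ℝ :=
  !![-s 0, -s 1, s 2, -s 3;
     s 1, -s 0, -s 3, -s 2;
     -s 2, s 3, -s 0, -s 1;
     s 3, s 2, s 1, -s 0]

/-- The embedding `ℝ⁴ → ℝ⁸`, `(s₀,s₁,s₂,s₃) ↦ (s₀,s₁,s₂,0,s₃,0,0,0)`, corresponding to
the quaternion subalgebra spanned by `1, e₁, e₂, e₄`. -/
noncomputable def embedQ (s : EuclideanSpace ℝ (Fin 4)) : EuclideanSpace ℝ (Fin 8) :=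
  WithLp.toLp 2 ![s 0, s 1, s 2, 0, s 3, 0, 0, 0]

/-!
In the basis `1, i, j, k` of `ℍ`, `M_s` is the matrix of `x ↦ conj (x s)`, and `L_s` is the matrix
of `x ↦ -x s̄` in the basis `1, i, -j, k`. Hence `L_r L_s L_t` is similar to right multiplication by
`u = -conj (r s t)`, whose characteristic polynomial is `(T² - 2 Re u T + |u|²)²`. Since `J R_a J`
(with `J` the conjugation and `R_a` right multiplication by `a`) is left multiplication by `ā`, it
commutes with every `R_b`, so `M_r M_s M_t = R_s (J R_{t r})`, which has the characteristic
polynomial of `J R_{s t r}`, the matrix of `x ↦ conj (x s t r)`. In both cases the real part is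
`p`, since `P` restricted to the quaternion subalgebra is `Re (r s t)`, and the squared norm is `m`.
-/

open Quaternion Polynomial

section QuaternionMatrices

variable {R : Type*} [CommRing R]

theorem Quaternion.re_mul_comm (a b : ℍ[R]) : (a * b).re = (b * a).re := by
  simp only [re_mul]
  ring

/-- The matrix of `x ↦ x * u` in the basis `1, i, j, k`. -/
def rightMulMatrix (u : ℍ[R]) : Matrix (Fin 4) (Fin 4) R :=
  !![u.re, -u.imI, -u.imJ, -u.imK;
     u.imI, u.re, u.imK, -u.imJ;
     u.imJ, -u.imK, u.re, u.imI;
     u.imK, u.imJ, -u.imI, u.re]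

def starMatrix : Matrix (Fin 4) (Fin 4) R := diagonal ![1, -1, -1, -1]

def negImJMatrix : Matrix (Fin 4) (Fin 4) R := diagonal ![1, 1, -1, 1]

theorem rightMulMatrix_mul (a b : ℍ[R]) :
    rightMulMatrix a * rightMulMatrix b = rightMulMatrix (b * a) := by
  ext i j
  fin_cases i <;> fin_cases j <;>
    simp [rightMulMatrix, Matrix.mul_apply, Fin.sum_univ_four] <;> ring

theorem starMatrix_mul_self : (starMatrix : Matrix (Fin 4) (Fin 4) R) * starMatrix = 1 := by
  rw [starMatrix, diagonal_mul_diagonal, ← diagonal_one]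
  congr 1
  ext i
  fin_cases i <;> simp

theorem negImJMatrix_mul_self : (negImJMatrix : Matrix (Fin 4) (Fin 4) R) * negImJMatrix = 1 := by
  rw [negImJMatrix, diagonal_mul_diagonal, ← diagonal_one]
  congr 1
  ext i
  fin_cases i <;> simp

theorem starMatrix_conj_commute (a b : ℍ[R]) :
    starMatrix * rightMulMatrix a * starMatrix * rightMulMatrix b =
      rightMulMatrix b * (starMatrix * rightMulMatrix a * starMatrix) := by
  ext i j
  fin_cases i <;> fin_cases j <;>
    simp [rightMulMatrix, starMatrix, Matrix.mul_apply, Fin.sum_univ_four] <;> ring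

theorem charpoly_rightMulMatrix (u : ℍ[R]) :
    (rightMulMatrix u).charpoly = (X ^ 2 - C (2 * u.re) * X + C (normSq u)) ^ 2 := by
  rw [Matrix.charpoly, Matrix.det_succ_row_zero]
  simp [rightMulMatrix, Fin.sum_univ_succ, Matrix.det_fin_three, Fin.succAbove, charmatrix_apply,
    normSq_def', map_ofNat]
  ring

theorem charpoly_starMatrix_mul_rightMulMatrix (u : ℍ[R]) :
    (starMatrix * rightMulMatrix u).charpoly =
      (X ^ 2 - C (normSq u)) * (X ^ 2 + C (2 * u.re) * X + C (normSq u)) := by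
  rw [Matrix.charpoly, Matrix.det_succ_row_zero]
  simp [rightMulMatrix, starMatrix, Fin.sum_univ_succ, Matrix.det_fin_three, Fin.succAbove,
    charmatrix_apply, normSq_def', map_ofNat]
  ring

end QuaternionMatrices

noncomputable def toQuat (s : EuclideanSpace ℝ (Fin 4)) : ℍ[ℝ] := linearIsometryEquivTuple.symm s

@[simp] theorem re_toQuat (s : EuclideanSpace ℝ (Fin 4)) : (toQuat s).re = s 0 := rfl
@[simp] theorem imI_toQuat (s : EuclideanSpace ℝ (Fin 4)) : (toQuat s).imI = s 1 := rfl
@[simp] theorem imJ_toQuat (s : EuclideanSpace ℝ (Fin 4)) : (toQuat s).imJ = s 2 := rfl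
@[simp] theorem imK_toQuat (s : EuclideanSpace ℝ (Fin 4)) : (toQuat s).imK = s 3 := rfl

theorem sq_norm_eq_normSq_toQuat (s : EuclideanSpace ℝ (Fin 4)) : ‖s‖ ^ 2 = normSq (toQuat s) := by
  rw [normSq_eq_norm_mul_self, toQuat, LinearIsometryEquiv.norm_map, sq]

theorem P3_embedQ (r s t : EuclideanSpace ℝ (Fin 4)) :
    P3 (embedQ r) (embedQ s) (embedQ t) = (toQuat r * toQuat s * toQuat t).re := by
  simp [P3, embedQ]
  ring

theorem Mmat_eq (s : EuclideanSpace ℝ (Fin 4)) :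
    Mmat s = starMatrix * rightMulMatrix (toQuat s) := by
  ext i j
  fin_cases i <;> fin_cases j <;> simp [Mmat, starMatrix, rightMulMatrix]

theorem Lmat_eq (s : EuclideanSpace ℝ (Fin 4)) :
    Lmat s = negImJMatrix * rightMulMatrix (-star (toQuat s)) * negImJMatrix := by
  ext i j
  fin_cases i <;> fin_cases j <;>
    simp [Lmat, negImJMatrix, rightMulMatrix, Matrix.mul_apply, Fin.sum_univ_four]

theorem Mmat_mul_Mmat_mul_Mmat (r s t : EuclideanSpace ℝ (Fin 4)) :
    Mmat r * Mmat s * Mmat t =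
      rightMulMatrix (toQuat s) * (starMatrix * rightMulMatrix (toQuat t * toQuat r)) := by
  rw [Mmat_eq, Mmat_eq, Mmat_eq, ← rightMulMatrix_mul]
  calc starMatrix * rightMulMatrix (toQuat r) * (starMatrix * rightMulMatrix (toQuat s)) *
        (starMatrix * rightMulMatrix (toQuat t))
      = starMatrix * rightMulMatrix (toQuat r) * starMatrix * rightMulMatrix (toQuat s) *
          starMatrix * rightMulMatrix (toQuat t) := by simp only [Matrix.mul_assoc]
    _ = rightMulMatrix (toQuat s) * (starMatrix * rightMulMatrix (toQuat r) * starMatrix) *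
          starMatrix * rightMulMatrix (toQuat t) := by rw [starMatrix_conj_commute]
    _ = _ := by simp only [Matrix.mul_assoc, starMatrix_mul_self, Matrix.one_mul]

theorem Lmat_mul_Lmat_mul_Lmat (r s t : EuclideanSpace ℝ (Fin 4)) :
    Lmat r * Lmat s * Lmat t =
      negImJMatrix * (rightMulMatrix (-star (toQuat r * toQuat s * toQuat t)) * negImJMatrix) := by
  have h : -star (toQuat r * toQuat s * toQuat t) =
      -star (toQuat t) * -star (toQuat s) * -star (toQuat r) := by
    simp only [star_mul, mul_neg, neg_mul, neg_neg, mul_assoc]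
  rw [Lmat_eq, Lmat_eq, Lmat_eq, h, ← rightMulMatrix_mul, ← rightMulMatrix_mul]
  simp only [Matrix.mul_assoc, ← Matrix.mul_assoc negImJMatrix negImJMatrix, negImJMatrix_mul_self,
    Matrix.one_mul]

open Polynomial in
/-- **Property 5** of the matrices `M_s`, `L_s`: for `r, s, t ∈ ℝ⁴`, with
`p = P(r,s,t)` (under the quaternionic embedding) and `m = |r|²|s|²|t|²`, the
characteristic polynomials of `M_r·M_s·M_t` and `L_r·L_s·L_t` are
`(T² − m)(T² + 2pT + m)` and `(T² + 2pT + m)²` respectively. -/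
theorem property_5 (r s t : EuclideanSpace ℝ (Fin 4)) :
    (Mmat r * Mmat s * Mmat t).charpoly =
      (X ^ 2 - C (‖r‖ ^ 2 * ‖s‖ ^ 2 * ‖t‖ ^ 2)) *
        (X ^ 2 + C (2 * P3 (embedQ r) (embedQ s) (embedQ t)) * X +
          C (‖r‖ ^ 2 * ‖s‖ ^ 2 * ‖t‖ ^ 2)) ∧
    (Lmat r * Lmat s * Lmat t).charpoly =
      (X ^ 2 + C (2 * P3 (embedQ r) (embedQ s) (embedQ t)) * X +
        C (‖r‖ ^ 2 * ‖s‖ ^ 2 * ‖t‖ ^ 2)) ^ 2 := by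
  have hre : (toQuat s * (toQuat t * toQuat r)).re = (toQuat r * toQuat s * toQuat t).re := by
    rw [Quaternion.re_mul_comm, mul_assoc, Quaternion.re_mul_comm]
  have hM : ‖r‖ ^ 2 * ‖s‖ ^ 2 * ‖t‖ ^ 2 = normSq (toQuat s * (toQuat t * toQuat r)) := by
    simp only [sq_norm_eq_normSq_toQuat, map_mul]
    ring
  have hL : ‖r‖ ^ 2 * ‖s‖ ^ 2 * ‖t‖ ^ 2 = normSq (-star (toQuat r * toQuat s * toQuat t)) := by
    simp only [normSq_neg, normSq_star, sq_norm_eq_normSq_toQuat, map_mul]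
  constructor
  · rw [Mmat_mul_Mmat_mul_Mmat, charpoly_mul_comm, Matrix.mul_assoc, rightMulMatrix_mul,
      charpoly_starMatrix_mul_rightMulMatrix, hM, P3_embedQ, ← hre]
  · rw [Lmat_mul_Lmat_mul_Lmat, charpoly_mul_comm, Matrix.mul_assoc, negImJMatrix_mul_self,
      Matrix.mul_one, charpoly_rightMulMatrix, hL, P3_embedQ, Quaternion.re_neg, re_star, mul_neg,
      map_neg, neg_mul, sub_neg_eq_add]
end
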